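/- arXiv:2011.01784 — 3 statements merged into one kernel-verified Lean document; each statement's English description precedes it below -/
import Mathlib

section
/- If p, q, s, t are positive integers with p > q ≥ 1, gcd(p,q)=1, satisfying the Markov-type equation p² + s² + t² = 3pst, and q·t ≡ ±3s (mod p), then there exists an integer c such that c² ≡ pq − 1 (mod p²) and p divides cq + 3. -/
/-!
Reducing the Markov equation modulo `p` gives `t² ≡ -s² [ZMOD p]`, so `p ∣ qt + 3s` forces
`p ∣ s (qs - 3t)`; modulo `p²` this is exactly `t² ≡ (pq - 1) s²`, and `c = t/s` modulo `p²`
works. The other sign reduces to this one through the Vieta neighbour `t' = 3ps - t`, which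
satisfies `t' ≡ -t [ZMOD p]`. Inverting `s` needs `p` and `s` coprime, which follows from
Hurwitz's descent: `x² + y² + z² = N xyz` has no positive solutions once `N ≥ 4`.
-/

lemma vieta_jump_pos_lt {N x y z : ℤ} (hN : 4 ≤ N) (hx : 0 < x) (hxy : x ≤ y) (hyz : y ≤ z)
    (h : x ^ 2 + y ^ 2 + z ^ 2 = N * x * y * z) :
    0 < N * x * y - z ∧ N * x * y - z < y := by
  -- `z` and `Nxy - z` are the roots of `X² - NxyX + x² + y²`, which is negative at `X = y`.
  have hprod : z * (N * x * y - z) = x ^ 2 + y ^ 2 := by linear_combination -h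
  have hval : (y - z) * (y - (N * x * y - z)) = x ^ 2 + 2 * y ^ 2 - N * x * y ^ 2 := by
    linear_combination hprod
  have hneg : x ^ 2 + 2 * y ^ 2 - N * x * y ^ 2 < 0 := by
    nlinarith [mul_le_mul_of_nonneg_right hN (mul_nonneg hx.le (sq_nonneg y))]
  have hz : 0 < z := hx.trans_le (hxy.trans hyz)
  refine ⟨pos_of_mul_pos_right (hprod ▸ by positivity) hz.le, ?_⟩
  by_contra! hd
  nlinarith [mul_nonneg (sub_nonneg.2 hyz) (sub_nonneg.2 hd)]

theorem sq_add_sq_add_sq_ne_mul {N : ℤ} (hN : 4 ≤ N) {x y z : ℤ} (hx : 0 < x) (hy : 0 < y)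
    (hz : 0 < z) : x ^ 2 + y ^ 2 + z ^ 2 ≠ N * x * y * z := by
  induction hn : (x + y + z).toNat using Nat.strong_induction_on generalizing x y z with
  | _ n ih =>
  intro h
  wlog hxy : x ≤ y generalizing x y
  · exact this hy hx (by omega) (by linear_combination h) (by omega)
  wlog hyz : y ≤ z generalizing x y z
  · rcases le_total x z with hxz | hzx
    · exact this hy hx hz (by omega) (by linear_combination h) hxz (by omega)
    · exact this hy hz hx (by omega) (by linear_combination h) hzx (by omega)
  obtain ⟨hd, hdy⟩ := vieta_jump_pos_lt hN hx hxy hyz h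
  exact ih _ (by omega) hx hy hd rfl (by linear_combination h)

theorem isCoprime_of_sq_add_sq_add_sq_eq {x y z : ℤ} (hx : 0 < x) (hy : 0 < y) (hz : 0 < z)
    (h : x ^ 2 + y ^ 2 + z ^ 2 = 3 * x * y * z) : IsCoprime x y := by
  rw [Int.isCoprime_iff_gcd_eq_one]
  obtain ⟨g, hg⟩ : ∃ g : ℕ, x.gcd y = g := ⟨_, rfl⟩
  have hg0 : (0 : ℤ) < g := by
    rw [← hg]; exact_mod_cast Int.gcd_pos_of_ne_zero_left y hx.ne'
  obtain ⟨X, rfl⟩ : (g : ℤ) ∣ x := hg ▸ Int.gcd_dvd_left x y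
  obtain ⟨Y, rfl⟩ : (g : ℤ) ∣ y := hg ▸ Int.gcd_dvd_right _ y
  obtain ⟨Z, rfl⟩ : (g : ℤ) ∣ z :=
    (Int.pow_dvd_pow_iff two_ne_zero).mp ⟨3 * X * Y * z - X ^ 2 - Y ^ 2, by linear_combination h⟩
  have hgXYZ : X ^ 2 + Y ^ 2 + Z ^ 2 = 3 * g * X * Y * Z :=
    mul_left_cancel₀ (pow_ne_zero 2 hg0.ne') (by linear_combination h)
  by_contra hg1
  have hg2 : (2 : ℤ) ≤ g := by omega
  exact sq_add_sq_add_sq_ne_mul (by linarith) (pos_of_mul_pos_right hx hg0.le)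
    (pos_of_mul_pos_right hy hg0.le) (pos_of_mul_pos_right hz hg0.le) hgXYZ

section Markov

variable {p q s t : ℤ}

theorem sq_modEq_of_markov (hmarkov : p ^ 2 + s ^ 2 + t ^ 2 = 3 * p * s * t)
    (hdvd : p ∣ q * t + 3 * s) : t ^ 2 ≡ (p * q - 1) * s ^ 2 [ZMOD p ^ 2] := by
  obtain ⟨k, hk⟩ := hdvd
  exact Int.modEq_iff_dvd.mpr
    ⟨1 - t * k + 3 * q * s * t - p * q, by linear_combination (p * q - 1) * hmarkov - p * t * hk⟩

theorem exists_sq_modEq_and_dvd_of_markov (hps : IsCoprime p s)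
    (hmarkov : p ^ 2 + s ^ 2 + t ^ 2 = 3 * p * s * t) (hdvd : p ∣ q * t + 3 * s) :
    ∃ c : ℤ, c ^ 2 ≡ p * q - 1 [ZMOD p ^ 2] ∧ p ∣ c * q + 3 := by
  obtain ⟨u, b, hub⟩ := hps.pow_left (m := 2)
  have hsb : s * b ≡ 1 [ZMOD p ^ 2] := Int.modEq_iff_dvd.mpr ⟨u, by linear_combination -hub⟩
  refine ⟨t * b, ?_, ?_⟩
  · calc (t * b) ^ 2 = t ^ 2 * b ^ 2 := by ring
      _ ≡ (p * q - 1) * s ^ 2 * b ^ 2 [ZMOD p ^ 2] :=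
        (sq_modEq_of_markov hmarkov hdvd).mul_right _
      _ = (p * q - 1) * (s * b) ^ 2 := by ring
      _ ≡ (p * q - 1) * 1 ^ 2 [ZMOD p ^ 2] := (hsb.pow 2).mul_left _
      _ = p * q - 1 := by ring
  · have h1 : p ∣ 1 - s * b := (dvd_pow_self p two_ne_zero).trans hsb.dvd
    have h2 : t * b * q + 3 = b * (q * t + 3 * s) + 3 * (1 - s * b) := by ring
    exact h2 ▸ (hdvd.mul_left b).add (h1.mul_left 3)

end Markov

theorem es_implies_condition_two_general (p q s t : ℤ)
    (hp : 0 < p) (hs : 0 < s) (ht : 0 < t)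
    (hmarkov : p ^ 2 + s ^ 2 + t ^ 2 = 3 * p * s * t)
    (hcong : q * t ≡ 3 * s [ZMOD p] ∨ q * t ≡ -(3 * s) [ZMOD p]) :
    ∃ c : ℤ, c ^ 2 ≡ p * q - 1 [ZMOD p ^ 2] ∧ p ∣ c * q + 3 := by
  have hps : IsCoprime p s := isCoprime_of_sq_add_sq_add_sq_eq hp hs ht hmarkov
  rcases hcong with h | h
  · obtain ⟨k, hk⟩ := h.dvd
    exact exists_sq_modEq_and_dvd_of_markov (t := 3 * p * s - t) hps
      (by linear_combination hmarkov) ⟨3 * q * s + k, by linear_combination hk⟩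
  · exact exists_sq_modEq_and_dvd_of_markov hps hmarkov (by simpa using h.symm.dvd)

/-- The Evans–Smith condition (ES) implies condition (2) of the main theorem. -/
theorem es_implies_condition_two (p q s t : ℤ)
    (hp : 0 < p) (hs : 0 < s) (ht : 0 < t)
    (hq1 : 1 ≤ q) (hqp : q < p) (hcop : IsCoprime p q)
    (hmarkov : p ^ 2 + s ^ 2 + t ^ 2 = 3 * p * s * t)
    (hcong : q * t ≡ 3 * s [ZMOD p] ∨ q * t ≡ -(3 * s) [ZMOD p]) :
    ∃ c : ℤ, c ^ 2 ≡ p * q - 1 [ZMOD p ^ 2] ∧ p ∣ c * q + 3 :=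
  es_implies_condition_two_general p q s t hp hs ht hmarkov hcong
end

section
/- Let a₁, …, aₙ be integers with aᵢ ≥ 2, and dᵢ defined by d₁ = 1, d₂ = a₁, dₛ = aₛ₋₁dₛ₋₁ − dₛ₋₂ (3 ≤ s ≤ n). Suppose aₙdₙ − dₙ₋₁ = p² and dₙ = p² − pq − 1 for positive coprime integers p > q. Then ∑_{i=1}^{n} (2 − aᵢ)dᵢ = −pq. -/
/-!
The sum telescopes: the recurrence gives
`(2 - aᵢ) dᵢ = (dᵢ - dᵢ₋₁) - (dᵢ₊₁ - dᵢ)`, so the partial sum up to `m` is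
`1 + dₘ - (aₘ dₘ - dₘ₋₁)`, where `aₘ dₘ - dₘ₋₁` plays the role of `dₘ₊₁`.
For `m = n` this is `1 + (p² - pq - 1) - p² = -pq`.
-/

open Finset

theorem sum_Icc_two_sub_mul_eq {a d : ℕ → ℤ} (hd1 : d 1 = 1) (hd2 : d 2 = a 1)
    {m : ℕ} (hm : 2 ≤ m)
    (hrec : ∀ s, 3 ≤ s → s ≤ m → d s = a (s - 1) * d (s - 1) - d (s - 2)) :
    ∑ i ∈ Icc 1 m, (2 - a i) * d i = 1 + d m - (a m * d m - d (m - 1)) := by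
  induction m, hm using Nat.le_induction with
  | base =>
    rw [show Icc 1 2 = {1, 2} by decide, sum_pair (by norm_num), hd1, hd2]
    ring
  | succ m hm ih =>
    have hnext : d (m + 1) = a m * d m - d (m - 1) := by
      simpa [show m + 1 - 2 = m - 1 by omega] using hrec (m + 1) (by omega) le_rfl
    rw [sum_Icc_succ_top (by omega), ih fun s h3 hs => hrec s h3 (by omega),
      Nat.add_sub_cancel]
    linear_combination hnext

theorem sum_two_sub_a_mul_d_general (n : ℕ) (hn : 2 ≤ n) (a d : ℕ → ℤ) (p q : ℤ)
    (hd1 : d 1 = 1) (hd2 : d 2 = a 1)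
    (hrec : ∀ s, 3 ≤ s → s ≤ n → d s = a (s - 1) * d (s - 1) - d (s - 2))
    (hlast : a n * d n - d (n - 1) = p ^ 2)
    (hdn : d n = p ^ 2 - p * q - 1) :
    ∑ i ∈ Finset.Icc 1 n, (2 - a i) * d i = -(p * q) := by
  rw [sum_Icc_two_sub_mul_eq hd1 hd2 hn hrec, hlast, hdn]
  ring

/-- Lemma 3.3: ∑ (2 − aᵢ) dᵢ = −pq. -/
theorem sum_two_sub_a_mul_d (n : ℕ) (hn : 2 ≤ n) (a d : ℕ → ℤ) (p q : ℤ)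
    (hp : 0 < p) (hq : 0 < q) (hqp : q < p) (hcop : IsCoprime p q)
    (ha : ∀ i, 1 ≤ i → i ≤ n → 2 ≤ a i)
    (hd1 : d 1 = 1) (hd2 : d 2 = a 1)
    (hrec : ∀ s, 3 ≤ s → s ≤ n → d s = a (s - 1) * d (s - 1) - d (s - 2))
    (hlast : a n * d n - d (n - 1) = p ^ 2)
    (hdn : d n = p ^ 2 - p * q - 1) :
    ∑ i ∈ Finset.Icc 1 n, (2 - a i) * d i = -(p * q) :=
  sum_two_sub_a_mul_d_general n hn a d p q hd1 hd2 hrec hlast hdn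
end

section
/- Let p, s, t be positive integers with p² + s² + t² = 3pst and gcd(s, p) = gcd(t, p) = 1. Let a be an integer with a·s ≡ t (mod p²) (an inverse computation mod p²). Then a + a⁻¹ ≡ 3p (mod p²), i.e., a² − 3pa + 1 ≡ 0 (mod p²); in particular a² ≡ −1 (mod p). -/
namespace Int

theorem sq_sub_mul_add_sq_modEq_zero_of_markov {p s t : ℤ}
    (h : p ^ 2 + s ^ 2 + t ^ 2 = 3 * p * s * t) :
    t ^ 2 - 3 * p * t * s + s ^ 2 ≡ 0 [ZMOD p ^ 2] :=
  Int.modEq_zero_iff_dvd.2 ⟨-1, by linear_combination h⟩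

/-- Dehomogenization: if `a ≡ t / s (mod n)`, a root `(t : s)` of the binary form
`X² - c X Y + Y²` gives a root `a` of `X² - c X + 1`. -/
theorem sq_sub_mul_add_one_modEq_zero_of_mul_modEq {n s t a c : ℤ} (hs : IsCoprime s n)
    (ha : a * s ≡ t [ZMOD n]) (h : t ^ 2 - c * t * s + s ^ 2 ≡ 0 [ZMOD n]) :
    a ^ 2 - c * a + 1 ≡ 0 [ZMOD n] := by
  have hmul : (a ^ 2 - c * a + 1) * s ^ 2 ≡ 0 [ZMOD n] :=
    calc (a ^ 2 - c * a + 1) * s ^ 2 = (a * s) ^ 2 - c * (a * s) * s + s ^ 2 := by ring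
      _ ≡ t ^ 2 - c * t * s + s ^ 2 [ZMOD n] := by gcongr
      _ ≡ 0 [ZMOD n] := h
  exact Int.modEq_zero_iff_dvd.2 <|
    (hs.pow_left (m := 2)).symm.dvd_of_dvd_mul_right (Int.modEq_zero_iff_dvd.1 hmul)

theorem sq_modEq_neg_one_of_sq_sub_mul_add_one_modEq_zero {p a c : ℤ}
    (h : a ^ 2 - c * p * a + 1 ≡ 0 [ZMOD p]) : a ^ 2 ≡ -1 [ZMOD p] := by
  have hp : c * p * a ≡ 0 [ZMOD p] :=
    Int.modEq_zero_iff_dvd.2 ((dvd_mul_left p c).mul_right a)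
  calc a ^ 2 = (a ^ 2 - c * p * a + 1) + c * p * a - 1 := by ring
    _ ≡ 0 + 0 - 1 [ZMOD p] := by gcongr
    _ = -1 := by ring

end Int

theorem a_quadratic_cong_general (p s t a : ℤ)
    (hmarkov : p ^ 2 + s ^ 2 + t ^ 2 = 3 * p * s * t)
    (hsp : IsCoprime s p)
    (ha : a * s ≡ t [ZMOD p ^ 2]) :
    a ^ 2 - 3 * p * a + 1 ≡ 0 [ZMOD p ^ 2] ∧ a ^ 2 ≡ -1 [ZMOD p] := by
  have hquad : a ^ 2 - 3 * p * a + 1 ≡ 0 [ZMOD p ^ 2] :=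
    Int.sq_sub_mul_add_one_modEq_zero_of_mul_modEq hsp.pow_right ha
      (Int.sq_sub_mul_add_sq_modEq_zero_of_markov hmarkov)
  exact ⟨hquad, Int.sq_modEq_neg_one_of_sq_sub_mul_add_one_modEq_zero
    (hquad.of_dvd (dvd_pow_self p two_ne_zero))⟩

/-- For a Markov-type triple, a ≡ t·s⁻¹ (mod p²) satisfies a² − 3pa + 1 ≡ 0
    (mod p²); in particular a² ≡ −1 (mod p). -/
theorem a_quadratic_cong (p s t a : ℤ) (hp : 0 < p) (hs : 0 < s) (ht : 0 < t)
    (hmarkov : p ^ 2 + s ^ 2 + t ^ 2 = 3 * p * s * t)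
    (hsp : IsCoprime s p) (htp : IsCoprime t p)
    (ha : a * s ≡ t [ZMOD p ^ 2]) :
    a ^ 2 - 3 * p * a + 1 ≡ 0 [ZMOD p ^ 2] ∧ a ^ 2 ≡ -1 [ZMOD p] :=
  a_quadratic_cong_general p s t a hmarkov hsp ha
end
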